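/- arXiv:1403.4803 — 2 statements merged into one kernel-verified Lean document; each statement's English description precedes it below -/
import Mathlib

section
/- Let y, ε : ℤ → ℝ be any real sequences such that y_τ = φ_0(τ) + Σ_{m=1}^p φ_m(τ) y_{τ−m} + ε_τ for every τ ∈ ℤ. Then for every t ∈ ℤ and every integer N ≥ 1, y_t = ξ_{t,N} y_{t−N} + Σ_{m=1}^{p−1} Σ_{i=1}^{p−m} φ_{m+i}(t−N+i) ξ_{t,N−i} y_{t−N−m} + Σ_{r=0}^{N−1} ξ_{t,r} (φ_0(t−r) + ε_{t−r}). (General solution theorem: the general solution is the sum of the homogeneous solution, involving the p initial values y_{t−N},…,y_{t−N−p+1}, and the particular solution, involving the drifts and errors from time t−N+1 to t, with Hessenbergian coefficients ξ.) -/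
/-!
Expanding `det Φ_{t,n+1}` along its first column, whose minors are block triangular with a
`-1`-diagonal block, gives the recursion `ξ_{t,n+1} = ∑_{i=1}^p φ_i(t-n-1+i) ξ_{t,n+1-i}`.
The theorem then holds for every `N ≥ 0` by induction: substituting the recurrence for `y_{t-N}`
into the identity at `N` produces the new particular term `ξ_{t,N} (φ_0(t-N) + ε_{t-N})`, and the
recursion turns the coefficients of `y_{t-N-1}, …, y_{t-N-p}` into those of the identity at `N+1`.
-/

open Finset

/-- The `k × k` solution matrix `Φ_{t,k}`: its (1-based) `(i,j)` entry is `-1` if `i = j-1`,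
`φ_{1+i−j}(t−k+i)` if `0 ≤ i−j ≤ p−1`, and `0` otherwise. -/
noncomputable def PhiMat (p : ℕ) (φ : ℕ → ℤ → ℝ) (t : ℤ) (k : ℕ) :
    Matrix (Fin k) (Fin k) ℝ :=
  fun i j =>
    if (i : ℕ) + 1 = (j : ℕ) then -1
    else if (j : ℕ) ≤ (i : ℕ) ∧ (i : ℕ) - (j : ℕ) + 1 ≤ p then
      φ ((i : ℕ) - (j : ℕ) + 1) (t - (k : ℤ) + (i : ℕ) + 1)
    else 0

/-- The Hessenbergian (Green function) `ξ_{t,k} = det Φ_{t,k}`, with the conventions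
`ξ_{t,0} = 1` (empty determinant) and `ξ_{t,k} = 0` for `k < 0`. -/
noncomputable def xi (p : ℕ) (φ : ℕ → ℤ → ℝ) (t : ℤ) (k : ℤ) : ℝ :=
  if 0 ≤ k then (PhiMat p φ t k.toNat).det else 0

theorem sum_Icc_one_eq_sum_range {M : Type*} [AddCommMonoid M] (f : ℕ → M) (n : ℕ) :
    ∑ i ∈ Icc 1 n, f i = ∑ i ∈ range n, f (i + 1) := by
  rw [range_eq_Ico, sum_Ico_add']
  rfl

section Hessenbergian

variable {p : ℕ} {φ : ℕ → ℤ → ℝ} {t : ℤ}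

theorem xi_zero : xi p φ t 0 = 1 := by
  simp [xi]

theorem xi_of_neg {k : ℤ} (hk : k < 0) : xi p φ t k = 0 := by
  simp [xi, not_le.mpr hk]

theorem xi_natCast (k : ℕ) : xi p φ t k = (PhiMat p φ t k).det := by
  simp [xi]

theorem PhiMat_succ_succ (n : ℕ) (r c : Fin n) :
    PhiMat p φ t (n + 1) r.succ c.succ = PhiMat p φ t n r c := by
  simp only [PhiMat, Fin.val_succ, add_left_inj, add_le_add_iff_right, Nat.add_sub_add_right]
  congr 3
  push_cast
  ring

theorem PhiMat_zero_succ (n : ℕ) (c : Fin n) :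
    PhiMat p φ t (n + 1) 0 c.succ = if (c : ℕ) = 0 then -1 else 0 := by
  simp [PhiMat, eq_comm]

theorem PhiMat_apply_zero (n : ℕ) (i : Fin (n + 1)) :
    PhiMat p φ t (n + 1) i 0
      = if (i : ℕ) + 1 ≤ p then φ (i + 1) (t - (n + 1) + (i + 1)) else 0 := by
  simp only [PhiMat, Fin.val_zero, Nat.sub_zero, zero_le, true_and]
  rw [if_neg (by omega)]
  push_cast
  ring_nf

theorem det_PhiMat_submatrix_succAbove_succ (n : ℕ) (i : Fin (n + 1)) :
    ((PhiMat p φ t (n + 1)).submatrix i.succAbove Fin.succ).det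
      = (-1) ^ (i : ℕ) * xi p φ t (n - i) := by
  induction n with
  | zero =>
    fin_cases i
    simp [xi_zero]
  | succ n ih =>
    induction i using Fin.cases with
    | zero =>
      have : (PhiMat p φ t (n + 2)).submatrix (0 : Fin (n + 2)).succAbove Fin.succ
          = PhiMat p φ t (n + 1) := by
        ext a b
        exact PhiMat_succ_succ _ a b
      rw [this, Fin.val_zero, pow_zero, one_mul, Nat.cast_zero, sub_zero, xi_natCast]
    | succ j =>
      set A := (PhiMat p φ t (n + 2)).submatrix j.succ.succAbove Fin.succ
      have hrow : A.det = -(A.submatrix Fin.succ Fin.succ).det := by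
        rw [Matrix.det_succ_row_zero, Fintype.sum_eq_single 0]
        · simp only [A, Matrix.submatrix_apply, Fin.succ_succAbove_zero, PhiMat_zero_succ]
          simp
        · intro c hc
          simp only [A, Matrix.submatrix_apply, Fin.succ_succAbove_zero, PhiMat_zero_succ]
          simp [Fin.val_ne_zero_iff.mpr hc]
      have hminor : A.submatrix Fin.succ Fin.succ
          = (PhiMat p φ t (n + 1)).submatrix j.succAbove Fin.succ := by
        ext a b
        simp [A, PhiMat_succ_succ]
      rw [hrow, hminor, ih, Fin.val_succ, pow_succ]
      push_cast
      ring_nf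

theorem xi_succ (n : ℕ) :
    xi p φ t (n + 1) = ∑ i ∈ Icc 1 p, φ i (t - (n + 1) + i) * xi p φ t (n + 1 - i) := by
  set g : ℕ → ℝ := fun i => φ i (t - (n + 1) + i) * xi p φ t (n + 1 - i)
  have hexpand : xi p φ t (n + 1) = ∑ i ∈ Icc 1 (n + 1), if i ≤ p then g i else 0 := by
    rw [sum_Icc_one_eq_sum_range, ← Fin.sum_univ_eq_sum_range, ← Nat.cast_succ, xi_natCast,
      Matrix.det_succ_column_zero]
    refine sum_congr rfl fun i _ => ?_
    rw [PhiMat_apply_zero, det_PhiMat_submatrix_succAbove_succ]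
    split_ifs
    · simp only [g, Nat.cast_add, Nat.cast_one, sub_add_eq_sub_sub]
      rw [mul_mul_mul_comm, ← pow_add, Even.neg_one_pow ⟨_, rfl⟩, one_mul]
      ring_nf
    · simp
  have hvanish : ∀ i ∈ Icc 1 p, i ∉ (Icc 1 (n + 1)).filter (· ≤ p) → g i = 0 := by
    intro i hi hi'
    simp only [mem_Icc, mem_filter] at hi hi'
    simp [g, xi_of_neg (show (n : ℤ) + 1 - i < 0 by omega)]
  rw [hexpand, ← sum_filter, sum_subset (fun i => by simp; omega) hvanish]

end Hessenbergian

/-- For `1 ≤ m < p`, the coefficient of `y (t - N - m)` in the homogeneous solution;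
for `m = 0` and `N ≥ 1` it is `ξ_{t,N}` again (`tailCoeff_succ_zero`). -/
noncomputable def tailCoeff (p : ℕ) (φ : ℕ → ℤ → ℝ) (t : ℤ) (N m : ℕ) : ℝ :=
  ∑ i ∈ Icc 1 (p - m), φ (m + i) (t - N + i) * xi p φ t (N - i)

section tailCoeff

variable {p : ℕ} {φ : ℕ → ℤ → ℝ} {t : ℤ}

theorem tailCoeff_zero_left (m : ℕ) : tailCoeff p φ t 0 m = 0 :=
  sum_eq_zero fun i hi => by
    rw [xi_of_neg (by simp at hi; omega), mul_zero]

theorem tailCoeff_self (N : ℕ) : tailCoeff p φ t N p = 0 := by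
  simp [tailCoeff]

theorem tailCoeff_succ_zero (N : ℕ) : tailCoeff p φ t (N + 1) 0 = xi p φ t (N + 1) := by
  simp [tailCoeff, xi_succ]

theorem tailCoeff_succ_left {m : ℕ} (hm : m < p) (N : ℕ) :
    tailCoeff p φ t (N + 1) m = φ (m + 1) (t - N) * xi p φ t N + tailCoeff p φ t N (m + 1) := by
  rw [tailCoeff, tailCoeff, show p - m = p - (m + 1) + 1 by omega, sum_Icc_one_eq_sum_range,
    sum_range_succ', sum_Icc_one_eq_sum_range, add_comm]
  push_cast
  congr 1
  · ring_nf
  · exact sum_congr rfl fun i _ => by ring_nf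

theorem xi_mul_add_sum_tailCoeff (hp : 1 ≤ p) (y : ℤ → ℝ) (N : ℕ) :
    xi p φ t N * ∑ m ∈ Icc 1 p, φ m (t - N) * y (t - N - m)
        + ∑ m ∈ Icc 1 (p - 1), tailCoeff p φ t N m * y (t - N - m)
      = xi p φ t (N + 1) * y (t - (N + 1))
        + ∑ m ∈ Icc 1 (p - 1), tailCoeff p φ t (N + 1) m * y (t - (N + 1) - m) := by
  obtain ⟨q, rfl⟩ : ∃ q, p = q + 1 := ⟨p - 1, by omega⟩
  calc _ = ∑ m ∈ Icc 1 (q + 1), (φ m (t - N) * xi (q + 1) φ t N + tailCoeff (q + 1) φ t N m)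
          * y (t - N - m) := by
        simp only [add_mul, sum_add_distrib, mul_sum, Nat.add_sub_cancel]
        rw [sum_Icc_succ_top (by omega) fun m => tailCoeff (q + 1) φ t N m * y (t - N - m),
          tailCoeff_self, zero_mul, add_zero]
        exact congrArg (· + _) (sum_congr rfl fun m _ => by ring)
    _ = ∑ m ∈ range (q + 1), tailCoeff (q + 1) φ t (N + 1) m * y (t - (N + 1) - m) := by
        rw [sum_Icc_one_eq_sum_range]
        refine sum_congr rfl fun m hm => ?_
        rw [tailCoeff_succ_left (by simpa using hm)]
        push_cast
        ring_nf
    _ = _ := by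
        rw [sum_range_succ', sum_Icc_one_eq_sum_range, tailCoeff_succ_zero, Nat.add_sub_cancel]
        push_cast
        ring_nf

end tailCoeff

theorem eq_xi_mul_add_sum_tailCoeff_add_sum {p : ℕ} (hp : 1 ≤ p) {φ : ℕ → ℤ → ℝ} {y ε : ℤ → ℝ}
    (hy : ∀ τ : ℤ, y τ = φ 0 τ + ∑ m ∈ Icc 1 p, φ m τ * y (τ - m) + ε τ) (t : ℤ) (N : ℕ) :
    y t = xi p φ t N * y (t - N) + ∑ m ∈ Icc 1 (p - 1), tailCoeff p φ t N m * y (t - N - m)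
      + ∑ r ∈ range N, xi p φ t r * (φ 0 (t - r) + ε (t - r)) := by
  induction N with
  | zero => simp [xi_zero, tailCoeff_zero_left]
  | succ N ih =>
    rw [hy (t - N)] at ih
    rw [sum_range_succ, Nat.cast_succ, ← xi_mul_add_sum_tailCoeff hp, ih]
    ring

theorem general_solution_theorem_general
    (p : ℕ) (hp : 1 ≤ p) (φ : ℕ → ℤ → ℝ) (y ε : ℤ → ℝ)
    (hy : ∀ τ : ℤ, y τ = φ 0 τ + ∑ m ∈ Finset.Icc 1 p, φ m τ * y (τ - m) + ε τ)
    (t : ℤ) (N : ℕ) :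
    y t = xi p φ t N * y (t - N)
      + ∑ m ∈ Finset.Icc 1 (p - 1), ∑ i ∈ Finset.Icc 1 (p - m),
          φ (m + i) (t - N + i) * xi p φ t ((N : ℤ) - i) * y (t - N - m)
      + ∑ r ∈ Finset.range N, xi p φ t r * (φ 0 (t - r) + ε (t - r)) := by
  simpa only [tailCoeff, sum_mul] using eq_xi_mul_add_sum_tailCoeff_add_sum hp hy t N

theorem general_solution_theorem
    (p : ℕ) (hp : 1 ≤ p) (φ : ℕ → ℤ → ℝ) (y ε : ℤ → ℝ)
    (hy : ∀ τ : ℤ, y τ = φ 0 τ + ∑ m ∈ Finset.Icc 1 p, φ m τ * y (τ - m) + ε τ)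
    (t : ℤ) (N : ℕ) (hN : 1 ≤ N) :
    y t = xi p φ t N * y (t - N)
      + ∑ m ∈ Finset.Icc 1 (p - 1), ∑ i ∈ Finset.Icc 1 (p - m),
          φ (m + i) (t - N + i) * xi p φ t ((N : ℤ) - i) * y (t - N - m)
      + ∑ r ∈ Finset.range N, xi p φ t r * (φ 0 (t - r) + ε (t - r)) :=
  general_solution_theorem_general p hp φ y ε hy t N
end

section
/- Let y, ε : ℤ → ℝ satisfy y_τ = φ_0(τ) + Σ_{m=1}^p φ_m(τ) y_{τ−m} + ε_τ for every τ ∈ ℤ, and fix t ∈ ℤ and an integer N ≥ 1. Set r_τ = φ_0(τ) + ε_τ and, for 1 ≤ i ≤ min(p,N), h_i = Σ_{j=i}^{p} φ_{p−j+i}(t−N+i) y_{t−N−p+j}. Let M be the N×N matrix obtained from Φ_{t,N} by replacing its first column with the column whose i-th entry is h_i + r_{t−N+i} for 1 ≤ i ≤ min(p,N) and r_{t−N+i} for min(p,N) < i ≤ N. Then y_t = det M; that is, the general solution of the recurrence is itself a single Hessenbergian. -/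
open Finset

/-- The general solution of the recurrence is itself a single Hessenbergian:
`y_t = det M`, where `M` is `Φ_{t,N}` with its first column replaced as described. -/
theorem general_solution_single_hessenbergian
    (p : ℕ) (hp : 1 ≤ p) (φ : ℕ → ℤ → ℝ) (y ε : ℤ → ℝ)
    (hy : ∀ τ : ℤ, y τ = φ 0 τ + ∑ m ∈ Finset.Icc 1 p, φ m τ * y (τ - m) + ε τ)
    (t : ℤ) (N : ℕ) (hN : 1 ≤ N)
    (r : ℤ → ℝ) (hr : ∀ τ : ℤ, r τ = φ 0 τ + ε τ)
    (h : ℕ → ℝ)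
    (hh : ∀ i : ℕ, h i = ∑ j ∈ Finset.Icc i p,
      φ (p - j + i) (t - N + i) * y (t - N - p + j))
    (M : Matrix (Fin N) (Fin N) ℝ)
    (hM : ∀ i j : Fin N, M i j =
      if (j : ℕ) = 0 then
        (if (i : ℕ) + 1 ≤ min p N then h ((i : ℕ) + 1) else 0)
          + r (t - N + (i : ℕ) + 1)
      else PhiMat p φ t N i j) :
    y t = M.det := by
  obtain ⟨n, rfl⟩ : ∃ n, N = n + 1 := ⟨N - 1, by omega⟩
  have hsum : ∀ τ : ℤ, ∑ m ∈ Finset.Icc 1 p, φ m τ * y (τ - m) = y τ - r τ := by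
    intro τ; rw [hr τ]
    have := hy τ
    linarith
  set c : Fin (n+1) → ℝ := fun j => if j = 0 then (1:ℝ) else y (t - ((n:ℤ)+1) + (j:ℕ)) with hc
  have key : ∀ i : Fin (n+1),
      (∑ j : Fin (n+1), c j * M i j) = if (i:ℕ) = n then y t else 0 := by
    intro i
    set τ : ℤ := t - ((n:ℤ)+1) + (i:ℕ) + 1 with hτ
    have hin : (i:ℕ) ≤ n := Nat.lt_succ_iff.mp i.isLt
    have hcast : t - ((n+1:ℕ):ℤ) + ((i:ℕ):ℤ) + 1 = τ := by push_cast [hτ]; ring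
    -- the matrix entries in columns ≥ 1
    have hPhi : ∀ j : Fin n, M i j.succ =
        (if (i:ℕ) = (j:ℕ) then (-1:ℝ) else 0)
          + (if (j:ℕ) + 1 ≤ (i:ℕ) ∧ (i:ℕ) - (j:ℕ) ≤ p then φ ((i:ℕ)-(j:ℕ)) τ else 0) := by
      intro j
      rw [hM]
      simp only [Fin.val_succ]
      rw [if_neg (by omega : ¬((j:ℕ)+1 = 0))]
      simp only [PhiMat, Fin.val_succ]
      rw [hcast]
      rcases Nat.lt_trichotomy (i:ℕ) (j:ℕ) with hlt | heq | hgt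
      · rw [if_neg (by omega : ¬((i:ℕ)+1 = (j:ℕ)+1)),
          if_neg (by omega : ¬(((j:ℕ)+1 ≤ (i:ℕ)) ∧ (i:ℕ) - ((j:ℕ)+1) + 1 ≤ p)),
          if_neg (by omega : ¬((i:ℕ) = (j:ℕ))),
          if_neg (by omega : ¬(((j:ℕ)+1 ≤ (i:ℕ)) ∧ (i:ℕ) - (j:ℕ) ≤ p))]
        norm_num
      · rw [if_pos (by omega : (i:ℕ)+1 = (j:ℕ)+1), if_pos heq,
          if_neg (by omega : ¬(((j:ℕ)+1 ≤ (i:ℕ)) ∧ (i:ℕ) - (j:ℕ) ≤ p))]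
        norm_num
      · rw [if_neg (by omega : ¬((i:ℕ)+1 = (j:ℕ)+1)),
          if_neg (by omega : ¬((i:ℕ) = (j:ℕ)))]
        have e1 : (i:ℕ) - ((j:ℕ)+1) + 1 = (i:ℕ) - (j:ℕ) := by omega
        rw [e1, zero_add]
    -- split the sum
    rw [Fin.sum_univ_succ]
    have hc0 : c 0 * M i 0 =
        (if (i:ℕ) + 1 ≤ min p (n+1) then h ((i:ℕ) + 1) else 0) + r τ := by
      rw [hc, hM]
      simp only [Fin.val_zero, if_pos rfl, hcast]
      norm_num
    have hcsucc : ∀ j : Fin n, c j.succ = y (t - ((n:ℤ)+1) + (j:ℕ) + 1) := by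
      intro j
      rw [hc]
      simp only [if_neg (Fin.succ_ne_zero j)]
      have hv : ((j.succ : Fin (n+1)) : ℕ) = (j:ℕ) + 1 := rfl
      rw [hv]
      push_cast
      ring_nf
    -- rewrite the tail sum
    have htail : ∑ j : Fin n, c j.succ * M i j.succ =
        (if (i:ℕ) = n then 0 else -(y τ)) +
        ∑ m ∈ Finset.Icc 1 p, (if m ≤ (i:ℕ) then φ m τ * y (τ - m) else 0) := by
      have hsplit : ∀ j : Fin n, c j.succ * M i j.succ =
          (if (i:ℕ) = (j:ℕ) then -(y (t - ((n:ℤ)+1) + (j:ℕ) + 1)) else 0)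
          + (if (j:ℕ) + 1 ≤ (i:ℕ) ∧ (i:ℕ) - (j:ℕ) ≤ p then
              y (t - ((n:ℤ)+1) + (j:ℕ) + 1) * φ ((i:ℕ)-(j:ℕ)) τ else 0) := by
        intro j
        rw [hcsucc j, hPhi j, mul_add]
        congr 1
        · split_ifs <;> ring
        · split_ifs <;> ring
      rw [Finset.sum_congr rfl (fun j _ => hsplit j), Finset.sum_add_distrib]
      congr 1
      · -- the -1 part
        rcases eq_or_lt_of_le hin with he | hlt
        · rw [if_pos he]
          apply Finset.sum_eq_zero
          intro j _
          rw [if_neg (by omega : ¬ (i:ℕ) = (j:ℕ))]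
        · rw [if_neg (by omega)]
          rw [Finset.sum_eq_single (⟨(i:ℕ), hlt⟩ : Fin n)]
          · rw [if_pos rfl, hτ]
          · intro b _ hb
            rw [if_neg]
            intro hhb
            exact hb (by ext; simp [← hhb])
          · intro habs; exact absurd (Finset.mem_univ _) habs
      · -- the φ part : reindex
        have hG : (∑ j : Fin n, if (j:ℕ) + 1 ≤ (i:ℕ) ∧ (i:ℕ) - (j:ℕ) ≤ p then
              y (t - ((n:ℤ)+1) + (j:ℕ) + 1) * φ ((i:ℕ)-(j:ℕ)) τ else 0) =
            ∑ j ∈ Finset.range n, if j + 1 ≤ (i:ℕ) ∧ (i:ℕ) - j ≤ p then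
              y (t - ((n:ℤ)+1) + j + 1) * φ ((i:ℕ)-j) τ else 0 :=
          Fin.sum_univ_eq_sum_range (fun j => if j + 1 ≤ (i:ℕ) ∧ (i:ℕ) - j ≤ p then
              y (t - ((n:ℤ)+1) + j + 1) * φ ((i:ℕ)-j) τ else 0) n
        rw [hG]
        rw [← Finset.sum_filter, ← Finset.sum_filter]
        refine Finset.sum_nbij' (fun j => (i:ℕ) - j) (fun m => (i:ℕ) - m) ?_ ?_ ?_ ?_ ?_
        · intro a ha
          simp only [Finset.mem_filter, Finset.mem_range] at ha
          simp only [Finset.mem_filter, Finset.mem_Icc]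
          omega
        · intro a ha
          simp only [Finset.mem_filter, Finset.mem_Icc] at ha
          simp only [Finset.mem_filter, Finset.mem_range]
          omega
        · intro a ha
          simp only [Finset.mem_filter, Finset.mem_range] at ha
          beta_reduce
          omega
        · intro a ha
          simp only [Finset.mem_filter, Finset.mem_Icc] at ha
          beta_reduce
          omega
        · intro a ha
          simp only [Finset.mem_filter, Finset.mem_range] at ha
          have harg : τ - ((i:ℕ) - a : ℕ) = t - ((n:ℤ)+1) + a + 1 := by
            push_cast [Nat.cast_sub (by omega : a ≤ (i:ℕ)), hτ]
            ring
          rw [harg]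
          ring
    rw [hc0, htail]
    -- rewrite the h-term
    have hH : (if (i:ℕ) + 1 ≤ min p (n+1) then h ((i:ℕ) + 1) else 0) =
        ∑ m ∈ Finset.Icc 1 p, (if (i:ℕ) + 1 ≤ m then φ m τ * y (τ - m) else 0) := by
      rw [← Finset.sum_filter]
      have hfil : (Finset.Icc 1 p).filter (fun m => (i:ℕ) + 1 ≤ m) = Finset.Icc ((i:ℕ)+1) p := by
        ext m
        simp only [Finset.mem_filter, Finset.mem_Icc]
        omega
      rw [hfil]
      by_cases hip : (i:ℕ) + 1 ≤ p
      · rw [if_pos (by omega), hh ((i:ℕ)+1)]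
        refine Finset.sum_nbij' (fun j => p - j + ((i:ℕ)+1)) (fun m => p - m + ((i:ℕ)+1))
          ?_ ?_ ?_ ?_ ?_
        · intro a ha; simp only [Finset.mem_Icc] at *; omega
        · intro a ha; simp only [Finset.mem_Icc] at *; omega
        · intro a ha; simp only [Finset.mem_Icc] at ha; beta_reduce; omega
        · intro a ha; simp only [Finset.mem_Icc] at ha; beta_reduce; omega
        · intro a ha
          simp only [Finset.mem_Icc] at ha
          have harg1 : t - ((n+1:ℕ):ℤ) + (((i:ℕ)+1 : ℕ):ℤ) = τ := by
            push_cast [hτ]; ring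
          have harg2 : t - ((n+1:ℕ):ℤ) - (p:ℤ) + (a:ℤ) = τ - ((p - a + ((i:ℕ)+1) : ℕ):ℤ) := by
            push_cast [Nat.cast_sub (by omega : a ≤ p), hτ]
            ring
          rw [harg1, harg2]
      · rw [if_neg (by omega), Finset.Icc_eq_empty (by omega), Finset.sum_empty]
    rw [hH]
    have hcomb : (∑ m ∈ Finset.Icc 1 p, (if (i:ℕ) + 1 ≤ m then φ m τ * y (τ - m) else 0))
        + (∑ m ∈ Finset.Icc 1 p, (if m ≤ (i:ℕ) then φ m τ * y (τ - m) else 0))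
        = y τ - r τ := by
      rw [← Finset.sum_add_distrib, ← hsum τ]
      apply Finset.sum_congr rfl
      intro m _
      split_ifs <;> first | ring1 | (exfalso; omega)
    rcases eq_or_lt_of_le hin with he | hlt
    · rw [if_pos he, if_pos he]
      have hτt : τ = t := by rw [hτ, he]; ring
      rw [hτt] at hcomb ⊢
      linarith
    · rw [if_neg (by omega), if_neg (by omega)]
      linarith
  -- determinant manipulation
  have hdet1 : (M.updateCol 0 (fun k => ∑ j, c j • M k j)).det = M.det := by
    rw [Matrix.det_updateCol_sum M 0 c]
    have : c 0 = 1 := by simp [hc]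
    rw [this, one_smul]
  have hcol : (fun k => ∑ j, c j • M k j) = fun k : Fin (n+1) => if (k:ℕ) = n then y t else 0 := by
    funext k
    rw [← key k]
    simp [smul_eq_mul]
  rw [hcol] at hdet1
  rw [← hdet1]
  -- now expand the determinant of the updated matrix
  set M' := M.updateCol 0 (fun k : Fin (n+1) => if (k:ℕ) = n then y t else 0) with hM'
  rw [Matrix.det_succ_column_zero]
  rw [Finset.sum_eq_single (Fin.last n)]
  · have hval : M' (Fin.last n) 0 = y t := by
      rw [hM', Matrix.updateCol_apply, if_pos rfl]
      simp
    rw [hval]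
    have hsub : (M'.submatrix (Fin.last n).succAbove Fin.succ).det = (-1:ℝ)^n := by
      have hent : ∀ a b : Fin n, (M'.submatrix (Fin.last n).succAbove Fin.succ) a b =
          PhiMat p φ t (n+1) a.castSucc b.succ := by
        intro a b
        rw [Matrix.submatrix_apply, Fin.succAbove_last, hM',
          Matrix.updateCol_apply, if_neg (Fin.succ_ne_zero b), hM]
        rw [if_neg (by exact (by omega : ¬ ((b:ℕ)+1 = 0)))]
      rw [Matrix.det_of_lowerTriangular]
      · have hdiag : ∀ a : Fin n, (M'.submatrix (Fin.last n).succAbove Fin.succ) a a = -1 := by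
          intro a
          rw [hent a a, PhiMat]
          simp
        rw [Finset.prod_congr rfl (fun a _ => hdiag a)]
        simp
      · intro a b hab
        have hab' : (a:ℕ) < (b:ℕ) := hab
        rw [hent a b, PhiMat]
        simp only [Fin.coe_castSucc, Fin.val_succ]
        rw [if_neg (by omega), if_neg (by omega)]
    rw [hsub, Fin.val_last]
    rcases Nat.even_or_odd n with he | ho
    · rw [he.neg_one_pow]; ring
    · rw [ho.neg_one_pow]; ring
  · intro b _ hb
    have : M' b 0 = 0 := by
      rw [hM', Matrix.updateCol_apply, if_pos rfl, if_neg]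
      intro hbn
      exact hb (by ext; simp [hbn])
    rw [this]
    ring
  · intro habs; exact absurd (Finset.mem_univ _) habs
end
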